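/- arXiv:2003.02687 — 2 statements merged into one kernel-verified Lean document; each statement's English description precedes it below -/
import Mathlib

section
/- Let G be a finite simple graph and let t be an integer with 1 ≤ t ≤ χ_DP(G). Then α_t^{DP}(G) ≥ |V(G)| / ⌈χ_DP(G)/t⌉. -/
open SimpleGraph

/-- `DPCover G H L` means `(L, H)` is a cover of the graph `G`:
(1) the sets `L u` partition `V(H)`; (2) each `H[L u]` is complete;
(3) for each edge `uv` of `G`, the edges of `H` between `L u` and `L v` form a matching;
(4) there are no edges of `H` between lists of distinct non-adjacent vertices. -/
structure DPCover {V : Type} (G : SimpleGraph V) {W : Type} (H : SimpleGraph W)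
    (L : V → Finset W) : Prop where
  partition : ∀ w : W, ∃! v : V, w ∈ L v
  cliques : ∀ v : V, ∀ a ∈ L v, ∀ b ∈ L v, a ≠ b → H.Adj a b
  matching : ∀ ⦃u v : V⦄, G.Adj u v → ∀ a ∈ L u, ∀ b ∈ L v, ∀ b' ∈ L v,
      H.Adj a b → H.Adj a b' → b = b'
  nonadj : ∀ ⦃u v : V⦄, u ≠ v → ¬ G.Adj u v → ∀ a ∈ L u, ∀ b ∈ L v, ¬ H.Adj a b

/-- A finset is independent in `H` if no two of its elements are adjacent. -/
def IsIndepFinset {W : Type} (H : SimpleGraph W) (S : Finset W) : Prop :=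
  ∀ a ∈ S, ∀ b ∈ S, ¬ H.Adj a b

/-- The independence number of `H`. -/
noncomputable def indepNum {W : Type} [Fintype W] (H : SimpleGraph W) : ℕ :=
  sSup {n : ℕ | ∃ S : Finset W, IsIndepFinset H S ∧ S.card = n}

/-- The DP-chromatic number of `G`: the least `m` such that every `m`-fold cover `(L, H)`
of `G` admits an `H`-coloring, i.e. an independent set in `H` of size `|V(G)|`. -/
noncomputable def chiDP {V : Type} [Fintype V] (G : SimpleGraph V) : ℕ :=
  sInf {m : ℕ | ∀ (W : Type) (_ : Fintype W) (H : SimpleGraph W) (L : V → Finset W),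
    DPCover G H L → (∀ v, (L v).card = m) →
    ∃ S : Finset W, IsIndepFinset H S ∧ S.card = Fintype.card V}

/-- The partial DP `t`-chromatic number of `G`: the minimum of the independence number
`α(H)` over all `t`-fold covers `(L, H)` of `G`. -/
noncomputable def alphaDP {V : Type} [Fintype V] (G : SimpleGraph V) (t : ℕ) : ℕ :=
  sInf {n : ℕ | ∃ (W : Type) (_ : Fintype W) (H : SimpleGraph W) (L : V → Finset W),
    DPCover G H L ∧ (∀ v, (L v).card = t) ∧ _root_.indepNum H = n}

/-- A graph `G` is partially DP-nice if `α_t^{DP}(G) ≥ t|V(G)|/χ_DP(G)` for all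
`t ∈ {1, …, χ_DP(G)}`. -/
def PartiallyDPNice {V : Type} [Fintype V] (G : SimpleGraph V) : Prop :=
  ∀ t : ℕ, 1 ≤ t → t ≤ chiDP G →
    (t * Fintype.card V : ℚ) / (chiDP G : ℚ) ≤ (alphaDP G t : ℚ)

/-!
Let `(L, H)` be a `t`-fold cover of `G` and `k = ⌈χ_DP(G)/t⌉`. Take `k` disjoint copies of `H`
and merge the `k` copies of each list into one clique: this is a `tk`-fold cover of `G` with
`tk ≥ χ_DP(G)`, so it has an independent set of size `|V(G)|`. Some copy of `H` carries at least
`|V(G)|/k` of its vertices, and these are independent in `H`.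
-/

open Finset

def blowUpGraph {V W : Type} (L : V → Finset W) (H : SimpleGraph W) (k : ℕ) :
    SimpleGraph (W × Fin k) where
  Adj a b := a ≠ b ∧ ((∃ v, a.1 ∈ L v ∧ b.1 ∈ L v) ∨ (a.2 = b.2 ∧ H.Adj a.1 b.1))
  symm := ⟨fun _ _ ⟨hne, h⟩ => ⟨hne.symm,
    h.imp (fun ⟨v, ha, hb⟩ => ⟨v, hb, ha⟩) (fun h => ⟨h.1.symm, h.2.symm⟩)⟩⟩
  loopless := ⟨fun _ h => h.1 rfl⟩

theorem IsIndepFinset.card_le_indepNum {W : Type} [Fintype W] {H : SimpleGraph W}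
    {S : Finset W} (hS : IsIndepFinset H S) : #S ≤ _root_.indepNum H :=
  le_csSup ⟨Fintype.card W, by rintro _ ⟨T, -, rfl⟩; exact card_le_univ T⟩ ⟨S, hS, rfl⟩

theorem IsIndepFinset.card_filter_snd_le_indepNum {V W : Type} [Fintype W] {L : V → Finset W}
    {H : SimpleGraph W} {k : ℕ} {S : Finset (W × Fin k)}
    (hS : IsIndepFinset (blowUpGraph L H k) S) (i : Fin k) :
    #{x ∈ S | x.2 = i} ≤ _root_.indepNum H := by
  classical
  have hinj : Set.InjOn Prod.fst (({x ∈ S | x.2 = i} : Finset (W × Fin k)) : Set (W × Fin k)) :=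
    fun x hx y hy h => Prod.ext h ((mem_filter.1 hx).2.trans (mem_filter.1 hy).2.symm)
  rw [← card_image_of_injOn hinj]
  refine IsIndepFinset.card_le_indepNum fun a ha b hb hab => ?_
  obtain ⟨x, hx, rfl⟩ := mem_image.1 ha
  obtain ⟨y, hy, rfl⟩ := mem_image.1 hb
  rw [mem_filter] at hx hy
  exact hS x hx.1 y hy.1
    ⟨fun h => hab.ne (congrArg Prod.fst h), .inr ⟨hx.2.trans hy.2.symm, hab⟩⟩

namespace DPCover

variable {V W : Type} {G : SimpleGraph V} {H : SimpleGraph W} {L : V → Finset W}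

theorem eq_of_mem (hc : DPCover G H L) {w : W} {u v : V} (hu : w ∈ L u) (hv : w ∈ L v) :
    u = v :=
  (hc.partition w).unique hu hv

theorem bot_singleton : DPCover G ⊥ (fun v => {v}) where
  partition w := ⟨w, mem_singleton_self w, fun _ h => (mem_singleton.1 h).symm⟩
  cliques _ _ ha _ hb hne := absurd ((mem_singleton.1 ha).trans (mem_singleton.1 hb).symm) hne
  matching _ _ _ _ _ _ _ _ _ h := h.elim
  nonadj _ _ _ _ _ _ _ _ h := h

theorem blowUpGraph_adj_of_ne (hc : DPCover G H L) {k : ℕ} {a b : W × Fin k} {u v : V}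
    (ha : a.1 ∈ L u) (hb : b.1 ∈ L v) (huv : u ≠ v) (hab : (blowUpGraph L H k).Adj a b) :
    a.2 = b.2 ∧ H.Adj a.1 b.1 :=
  hab.2.resolve_left fun ⟨_, haw, hbw⟩ =>
    huv ((hc.eq_of_mem ha haw).trans (hc.eq_of_mem hb hbw).symm)

theorem blowUp (hc : DPCover G H L) (k : ℕ) :
    DPCover G (blowUpGraph L H k) (fun v => L v ×ˢ univ) where
  partition x := by simpa only [mem_product, mem_univ, and_true] using hc.partition x.1
  cliques v _ ha _ hb hne := ⟨hne, .inl ⟨v, (mem_product.1 ha).1, (mem_product.1 hb).1⟩⟩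
  matching u v huv a ha b hb b' hb' hab hab' := by
    simp only [mem_product, mem_univ, and_true] at ha hb hb'
    obtain ⟨hab₂, hab₁⟩ := hc.blowUpGraph_adj_of_ne ha hb huv.ne hab
    obtain ⟨hab₂', hab₁'⟩ := hc.blowUpGraph_adj_of_ne ha hb' huv.ne hab'
    exact Prod.ext (hc.matching huv _ ha _ hb _ hb' hab₁ hab₁') (hab₂.symm.trans hab₂')
  nonadj u v huv hG a ha b hb hab := by
    simp only [mem_product, mem_univ, and_true] at ha hb
    exact hc.nonadj huv hG _ ha _ hb (hc.blowUpGraph_adj_of_ne ha hb huv hab).2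

theorem restrict (hc : DPCover G H L) {M : V → Finset W} (hM : ∀ v, M v ⊆ L v)
    [DecidablePred (· ∈ ⋃ v, (M v : Set W))] :
    DPCover G (H.induce (⋃ v, (M v : Set W)))
      (fun v => (M v).subtype (· ∈ ⋃ v, (M v : Set W))) where
  partition w := by
    obtain ⟨v, hv⟩ := Set.mem_iUnion.1 w.2
    exact ⟨v, mem_subtype.2 hv, fun u hu => hc.eq_of_mem (hM u (mem_subtype.1 hu)) (hM v hv)⟩
  cliques v a ha b hb hne := hc.cliques v a (hM v (mem_subtype.1 ha)) b
    (hM v (mem_subtype.1 hb)) (Subtype.coe_injective.ne hne)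
  matching u v huv a ha b hb b' hb' hab hab' := Subtype.ext <| hc.matching huv
    a (hM u (mem_subtype.1 ha)) b (hM v (mem_subtype.1 hb)) b' (hM v (mem_subtype.1 hb')) hab hab'
  nonadj u v huv hG a ha b hb :=
    hc.nonadj huv hG a (hM u (mem_subtype.1 ha)) b (hM v (mem_subtype.1 hb))

theorem exists_isIndepFinset_of_chiDP_le [Fintype V] [Finite W] (hc : DPCover G H L)
    (hχ : 0 < chiDP G) (hL : ∀ v, chiDP G ≤ #(L v)) :
    ∃ S : Finset W, IsIndepFinset H S ∧ #S = Fintype.card V := by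
  classical
  choose M hML hM using fun v => exists_subset_card_eq (hL v)
  have hcard : ∀ v, #((M v).subtype (· ∈ ⋃ v, (M v : Set W))) = chiDP G := fun v => by
    rw [card_subtype, filter_true_of_mem fun w hw => Set.mem_iUnion.2 ⟨v, hw⟩, hM]
  obtain ⟨S, hS, hSV⟩ := Nat.sInf_mem (Nat.nonempty_of_pos_sInf hχ) _ (Fintype.ofFinite _) _ _
    (hc.restrict hML) hcard
  refine ⟨S.map (Function.Embedding.subtype _), fun a ha b hb => ?_, by rw [card_map, hSV]⟩
  obtain ⟨a', ha', rfl⟩ := mem_map.1 ha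
  obtain ⟨b', hb', rfl⟩ := mem_map.1 hb
  exact hS a' ha' b' hb'

theorem card_le_mul_indepNum [Fintype V] [Fintype W] (hc : DPCover G H L) {t k : ℕ}
    (ht : ∀ v, #(L v) = t) (hχ : 0 < chiDP G) (htk : chiDP G ≤ t * k) :
    Fintype.card V ≤ k * _root_.indepNum H := by
  obtain ⟨S, hS, hSV⟩ := (hc.blowUp k).exists_isIndepFinset_of_chiDP_le hχ fun v => by
    simpa only [card_product, card_univ, Fintype.card_fin, ht] using htk
  by_contra! h
  obtain ⟨i, -, hi⟩ := exists_lt_card_fiber_of_mul_lt_card_of_maps_to (s := S) (t := univ)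
    (f := Prod.snd) (fun x _ => mem_univ x.2) (by rwa [card_univ, Fintype.card_fin, hSV])
  exact (hi.trans_le (hS.card_filter_snd_le_indepNum i)).false

end DPCover

theorem exists_dpCover_indepNum_eq_alphaDP {V : Type} [Fintype V] (G : SimpleGraph V) (t : ℕ) :
    ∃ (W : Type) (_ : Fintype W) (H : SimpleGraph W) (L : V → Finset W),
      DPCover G H L ∧ (∀ v, #(L v) = t) ∧ _root_.indepNum H = alphaDP G t :=
  Nat.sInf_mem (s := {n | ∃ (W : Type) (_ : Fintype W) (H : SimpleGraph W) (L : V → Finset W),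
      DPCover G H L ∧ (∀ v, #(L v) = t) ∧ _root_.indepNum H = n})
    ⟨_, V × Fin t, inferInstance, _, _, DPCover.bot_singleton.blowUp t, fun v => by simp, rfl⟩

theorem card_le_mul_alphaDP {V : Type} [Fintype V] {G : SimpleGraph V} {t k : ℕ}
    (hχ : 0 < chiDP G) (htk : chiDP G ≤ t * k) : Fintype.card V ≤ k * alphaDP G t := by
  obtain ⟨W, _, H, L, hc, ht, hα⟩ := exists_dpCover_indepNum_eq_alphaDP G t
  exact hα ▸ hc.card_le_mul_indepNum ht hχ htk

theorem alphaDP_ge_card_div_ceil_general {V : Type} [Fintype V] (G : SimpleGraph V)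
    (t : ℕ) :
    (Fintype.card V : ℚ) / (⌈(chiDP G : ℚ) / (t : ℚ)⌉ : ℚ) ≤ (alphaDP G t : ℚ) := by
  set k := ⌈(chiDP G : ℚ) / t⌉₊ with hk
  rw [← natCast_ceil_eq_intCast_ceil (by positivity), ← hk]
  rcases k.eq_zero_or_pos with hk0 | hkpos
  · simp [hk0]
  obtain ⟨hχ, ht⟩ : (0 : ℚ) < chiDP G ∧ (0 : ℚ) < t :=
    (div_pos_iff.1 (Nat.ceil_pos.1 hkpos)).resolve_right fun h => h.1.not_ge (by positivity)
  have htk : chiDP G ≤ t * k := by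
    have hle : (chiDP G : ℚ) / t ≤ k := Nat.le_ceil _
    rw [div_le_iff₀ ht] at hle
    exact_mod_cast hle.trans_eq (mul_comm _ _)
  rw [div_le_iff₀ (by positivity)]
  exact_mod_cast (card_le_mul_alphaDP (by exact_mod_cast hχ) htk).trans_eq (mul_comm _ _)

/-- For any graph `G` and `t ∈ {1, …, χ_DP(G)}`,
`α_t^{DP}(G) ≥ |V(G)| / ⌈χ_DP(G)/t⌉`. -/
theorem alphaDP_ge_card_div_ceil {V : Type} [Fintype V] (G : SimpleGraph V)
    (t : ℕ) (h1 : 1 ≤ t) (h2 : t ≤ chiDP G) :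
    (Fintype.card V : ℚ) / (⌈(chiDP G : ℚ) / (t : ℚ)⌉ : ℚ) ≤ (alphaDP G t : ℚ) :=
  alphaDP_ge_card_div_ceil_general G t
end

section
/- Every finite simple chordal graph is partially DP-nice; that is, if G is chordal then α_t^{DP}(G) ≥ t·|V(G)|/χ_DP(G) for every integer t with 1 ≤ t ≤ χ_DP(G). -/
open SimpleGraph

/-- A graph is chordal if every cycle of length at least 4 has a chord: an edge of the
graph joining two vertices of the cycle that is not an edge of the cycle. -/
def IsChordalGraph {V : Type} (G : SimpleGraph V) : Prop :=
  ∀ ⦃v : V⦄ (c : G.Walk v v), c.IsCycle → 4 ≤ c.length →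
    ∃ a b : V, a ∈ c.support ∧ b ∈ c.support ∧ G.Adj a b ∧ s(a, b) ∉ c.edges

/-!
A chordal graph has a simplicial vertex in every induced subgraph (Dirac), so greedy colouring
along simplicial vertices shows: if every clique inside `U` has at most `t` vertices, then every
`t`-fold cover `(L, H)` has an `H`-colouring of `G[U]`, whence `α(H) ≥ |U|`. The `m`-fold cover
`G □ Kₘ` is `H`-colourable only if `G` is properly `m`-colourable, so `G` has a proper colouring
with `m = χ_DP(G)` colours. For `t ≤ m`, the union `U` of its `t` largest colour classes has at
least `t|V|/m` vertices and meets every clique in at most `t` vertices, so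
`α_t^DP(G) ≥ |U| ≥ t|V|/m`.
-/

open Finset

theorem Finset.exists_card_eq_mul_sum_le {ι : Type*} [Fintype ι] (f : ι → ℕ) {t : ℕ}
    (ht : t ≤ Fintype.card ι) :
    ∃ T : Finset ι, #T = t ∧ t * ∑ i, f i ≤ Fintype.card ι * ∑ i ∈ T, f i := by
  classical
  obtain ⟨T, hTmem, hTmax⟩ := exists_max_image (powersetCard t univ) (fun T => ∑ i ∈ T, f i)
    (powersetCard_nonempty.2 (by simpa using ht))
  have hT := mem_powersetCard_univ.1 hTmem
  refine ⟨T, hT, ?_⟩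
  -- `T` is a heaviest `t`-subset, so exchanging one element cannot increase its weight.
  have hswap : ∀ i ∉ T, ∀ j ∈ T, f i ≤ f j := by
    intro i hi j hj
    have hi' : i ∉ T.erase j := fun h => hi (mem_of_mem_erase h)
    have hmax := hTmax (insert i (T.erase j)) (mem_powersetCard_univ.2 (by
      rw [card_insert_of_notMem hi', card_erase_of_mem hj, hT]
      have := card_pos.2 ⟨j, hj⟩
      omega))
    rw [sum_insert hi'] at hmax
    have := add_sum_erase T f hj
    omega
  have hout : t * ∑ i ∈ Tᶜ, f i ≤ #Tᶜ * ∑ i ∈ T, f i := by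
    rw [mul_sum, ← smul_eq_mul, ← sum_const]
    refine sum_le_sum fun i hi => ?_
    calc t * f i = ∑ _j ∈ T, f i := by simp [hT]
      _ ≤ ∑ j ∈ T, f j := sum_le_sum fun j hj => hswap i (mem_compl.1 hi) j hj
  calc t * ∑ i, f i = t * ∑ i ∈ T, f i + t * ∑ i ∈ Tᶜ, f i := by
        rw [← sum_add_sum_compl T, mul_add]
    _ ≤ t * ∑ i ∈ T, f i + #Tᶜ * ∑ i ∈ T, f i := by gcongr
    _ = Fintype.card ι * ∑ i ∈ T, f i := by
        rw [← add_mul, card_compl, hT, Nat.add_sub_cancel' ht]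

theorem Finset.exists_card_eq_mul_card_le_mul_card_filter {α ι : Type*} [Fintype α] [Fintype ι]
    [DecidableEq ι] (c : α → ι) {t : ℕ} (ht : t ≤ Fintype.card ι) :
    ∃ T : Finset ι, #T = t ∧ t * Fintype.card α ≤ Fintype.card ι * #{a | c a ∈ T} := by
  obtain ⟨T, hT, hle⟩ := exists_card_eq_mul_sum_le (fun i => #{a | c a = i}) ht
  refine ⟨T, hT, ?_⟩
  rwa [← card_univ, ← sum_card_fiberwise_eq_card_filter, card_eq_sum_card_fiberwise
    (f := c) (t := univ) fun _ _ => mem_coe.2 (mem_univ _)]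

namespace SimpleGraph

variable {V : Type*} {G : SimpleGraph V}

theorem Walk.isChordless_of_length_eq_dist {u v : V} (p : G.Walk u v)
    (hp : p.length = G.dist u v) : p.IsChordless := by
  classical
  rw [isChordless_iff_forall_mem_edges]
  induction p with
  | nil =>
    intro c d hc hd hcd
    simp only [support_nil, List.mem_singleton] at hc hd
    exact absurd hcd (hc ▸ hd ▸ G.irrefl)
  | @cons x u y hxu q ih =>
    have hdist_le : ∀ {z : V} (r : G.Walk z y), G.Adj x z → q.length ≤ r.length :=
      fun r hxz => by
      have := dist_le (cons hxz r)
      simp only [length_cons] at hp this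
      omega
    have hq : q.length = G.dist u y := by
      obtain ⟨r, hr⟩ := q.reachable.exists_walk_length_eq_dist
      exact le_antisymm (hr ▸ hdist_le r hxu) (dist_le q)
    have hfirst : ∀ d ∈ q.support, G.Adj x d → u = d := fun d hd hxd => by
      have hsplit := congrArg length (q.take_spec hd)
      rw [length_append] at hsplit
      have := hdist_le (q.dropUntil d hd) hxd
      exact (q.takeUntil d hd).eq_of_length_eq_zero (by omega)
    intro c d hc hd hcd
    rw [support_cons, List.mem_cons] at hc hd
    rw [edges_cons, List.mem_cons]
    rcases hc with rfl | hc <;> rcases hd with rfl | hd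
    · exact absurd hcd G.irrefl
    · exact .inl (hfirst d hd hcd ▸ rfl)
    · exact .inl (hfirst c hc hcd.symm ▸ Sym2.eq_swap)
    · exact .inr (ih hq hc hd hcd)

theorem Reachable.exists_isPath_isChordless_of_induce {U : Set V} {x y : U}
    (h : (G.induce U).Reachable x y) :
    ∃ p : G.Walk x y, p.IsPath ∧ p.IsChordless ∧ ∀ z ∈ p.support, z ∈ U := by
  obtain ⟨P, hP, hPdist⟩ := h.exists_path_of_dist
  have hPc : (P.map (Embedding.induce U).toHom).IsChordless := by
    rw [Walk.isChordless_iff_forall_mem_edges]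
    intro c d hc hd hcd
    rw [Walk.support_map, List.mem_map] at hc hd
    obtain ⟨c, hc, rfl⟩ := hc
    obtain ⟨d, hd, rfl⟩ := hd
    rw [Walk.edges_map]
    exact List.mem_map_of_mem (f := Sym2.map _)
      ((P.isChordless_of_length_eq_dist hPdist).mem_edges hc hd hcd)
  have hPU : ∀ z ∈ (P.map (Embedding.induce U).toHom).support, z ∈ U := fun z hz => by
    rw [Walk.support_map, List.mem_map] at hz
    obtain ⟨z, -, rfl⟩ := hz
    exact z.2
  exact ⟨_, hP.map Subtype.val_injective, hPc, hPU⟩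

theorem connected_induce_setOf_exists_walk {R : Set V} {b : V} (hb : b ∈ R) :
    (G.induce {z | ∃ p : G.Walk b z, ∀ w ∈ p.support, w ∈ R}).Connected := by
  classical
  exact induce_connected_of_patches b ⟨.nil, by simpa using hb⟩ fun {_} ⟨p, hp⟩ =>
    ⟨{w | w ∈ p.support}, fun w hw => ⟨p.takeUntil w hw, fun w' hw' =>
      hp w' (p.support_takeUntil_subset_support hw hw')⟩,
      p.start_mem_support, p.end_mem_support, p.connected_induce_support.preconnected _ _⟩

theorem exists_preconnected_induce_closed {R : Finset V} {b : V} (hb : b ∈ R) :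
    ∃ C ⊆ R, b ∈ C ∧ (G.induce (C : Set V)).Preconnected ∧
      ∀ z ∈ C, ∀ w ∈ R, G.Adj z w → w ∈ C := by
  classical
  set C : Finset V := {z ∈ R | ∃ p : G.Walk b z, ∀ w ∈ p.support, w ∈ R}
  have hC : (C : Set V) = {z | ∃ p : G.Walk b z, ∀ w ∈ p.support, w ∈ (R : Set V)} := by
    ext z
    exact ⟨fun h => (mem_filter.1 (mem_coe.1 h)).2,
      fun h => mem_coe.2 (mem_filter.2 ⟨h.elim fun p hp => hp z p.end_mem_support, h⟩)⟩
  refine ⟨C, filter_subset _ _, mem_filter.2 ⟨hb, .nil, by simpa using hb⟩,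
    hC ▸ (connected_induce_setOf_exists_walk (mem_coe.2 hb)).preconnected,
    fun z hz w hw hzw => ?_⟩
  obtain ⟨p, hp⟩ := (mem_filter.1 hz).2
  refine mem_filter.2 ⟨hw, p.concat hzw, fun u hu => ?_⟩
  rw [Walk.support_concat, List.mem_append, List.mem_singleton] at hu
  exact hu.elim (hp u) (· ▸ hw)

end SimpleGraph

section Chordal

variable {V : Type} {G : SimpleGraph V}

def IsSimplicial (G : SimpleGraph V) (s : Set V) (v : V) : Prop :=
  G.IsClique (G.neighborSet v ∩ s)

/-- A shortest `x`–`y` path in `G[U]`, closed up through `a`, is a cycle of length at least 4,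
and none of its vertex pairs can carry a chord. -/
theorem IsChordalGraph.adj_of_reachable_induce (hG : IsChordalGraph G) {a x y : V} {U : Set V}
    (haU : a ∉ U) (hx : x ∈ U) (hy : y ∈ U) (hxy : x ≠ y) (hax : G.Adj a x) (hay : G.Adj a y)
    (hU : ∀ z ∈ U, G.Adj a z → z = x ∨ z = y)
    (hreach : (G.induce U).Reachable ⟨x, hx⟩ ⟨y, hy⟩) : G.Adj x y := by
  by_contra hnxy
  obtain ⟨p, hp, hpc, hpU⟩ := hreach.exists_isPath_isChordless_of_induce
  have hlen : 2 ≤ p.length := by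
    by_contra! hlt
    interval_cases hl : p.length
    · exact hxy (p.eq_of_length_eq_zero hl)
    · exact hnxy (p.adj_of_length_eq_one hl)
  have haP : a ∉ p.support := fun h => haU (hpU a h)
  set c := Walk.cons hax (p.concat hay.symm)
  have hc : c.IsCycle := by
    refine (Walk.cons_isCycle_iff _ _).2 ⟨hp.concat haP _, fun h => ?_⟩
    rw [Walk.edges_concat, List.concat_eq_append, List.mem_append, List.mem_singleton] at h
    rcases h with h | h
    · exact haP (p.fst_mem_support_of_mem_edges h)
    · rcases Sym2.eq_iff.1 h with ⟨rfl, -⟩ | ⟨-, rfl⟩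
      exacts [G.irrefl hay, hxy rfl]
  obtain ⟨u, w, hu, hw, huw, hchord⟩ := hG c hc (by simp [c]; omega)
  have hmem : ∀ z ∈ c.support, z = a ∨ z ∈ p.support := by
    simp only [c, Walk.support_cons, Walk.support_concat, List.mem_cons,
      List.mem_append]
    tauto
  have hedges : c.edges = s(a, x) :: (p.edges ++ [s(y, a)]) := by
    simp [c, Walk.edges_concat]
  have haz : ∀ z ∈ p.support, G.Adj a z → s(a, z) ∈ c.edges := fun z hz haz => by
    rw [hedges]
    rcases hU z (hpU z hz) haz with rfl | rfl
    · exact List.mem_cons_self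
    · simp [Sym2.eq_swap]
  apply hchord
  rcases hmem u hu with rfl | hu' <;> rcases hmem w hw with rfl | hw'
  · exact absurd huw G.irrefl
  · exact haz w hw' huw
  · exact Sym2.eq_swap ▸ haz u hu' huw.symm
  · rw [hedges]
    exact List.mem_cons_of_mem _ (List.mem_append_left _ (hpc.mem_edges hu' hw' huw))

theorem IsChordalGraph.isClique_setOf_adj_of_preconnected (hG : IsChordalGraph G) {a : V}
    {C : Set V} (haC : a ∉ C) (hCa : ∀ z ∈ C, ¬ G.Adj a z) (hC : (G.induce C).Preconnected) :
    G.IsClique {x | G.Adj a x ∧ ∃ c ∈ C, G.Adj x c} := by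
  rintro x ⟨hax, c, hc, hxc⟩ y ⟨hay, c', hc', hyc'⟩ hxy
  have hCU : C ⊆ insert x (insert y C) := fun z hz => .inr (.inr hz)
  refine hG.adj_of_reachable_induce (U := insert x (insert y C)) ?_ (.inl rfl) (.inr (.inl rfl))
    hxy hax hay ?_ ?_
  · rintro (h | h | h)
    exacts [hax.ne h, hay.ne h, haC h]
  · rintro z (rfl | rfl | hz) haz
    exacts [.inl rfl, .inr rfl, absurd haz (hCa z hz)]
  · have hcc' := (hC ⟨c, hc⟩ ⟨c', hc'⟩).map (G.induceHomOfLE hCU).toHom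
    exact (Adj.reachable (G := G.induce _) (u := ⟨x, .inl rfl⟩) (v := ⟨c, hCU hc⟩) hxc).trans
      (hcc'.trans (Adj.reachable (G := G.induce _) (v := ⟨y, .inr (.inl rfl)⟩) hyc'.symm))

/-- Let `C` be the component of `b` in `G[s \ N[a]]`; its neighbours `S ⊆ N(a)` form a clique.
A simplicial vertex of `G[C ∪ S]` outside `S` lies in `C`, so it stays simplicial in `G[s]`. -/
theorem IsChordalGraph.exists_isSimplicial_not_adj (hG : IsChordalGraph G) {s : Finset V}
    (ih : ∀ s' ⊂ s, ∀ K : Set V, G.IsClique K → ¬ ↑s' ⊆ K →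
      ∃ v ∈ s', v ∉ K ∧ IsSimplicial G s' v)
    {a b : V} (ha : a ∈ s) (hb : b ∈ s) (hab : a ≠ b) (hnadj : ¬ G.Adj a b) :
    ∃ v ∈ s, v ≠ a ∧ ¬ G.Adj a v ∧ IsSimplicial G s v := by
  classical
  set R : Finset V := {z ∈ s | z ≠ a ∧ ¬ G.Adj a z}
  obtain ⟨C, hCR', hbC, hCconn, hCclosed⟩ :=
    exists_preconnected_induce_closed (G := G) (mem_filter.2 ⟨hb, hab.symm, hnadj⟩ : b ∈ R)
  have hCR : ∀ z ∈ C, z ∈ s ∧ z ≠ a ∧ ¬ G.Adj a z := fun z hz => mem_filter.1 (hCR' hz)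
  set S : Finset V := {z ∈ s | G.Adj a z ∧ ∃ c ∈ C, G.Adj z c}
  have hS : G.IsClique (S : Set V) :=
    (hG.isClique_setOf_adj_of_preconnected (fun h => (hCR a h).2.1 rfl)
      (fun z hz => (hCR z hz).2.2) hCconn).subset fun z hz => (mem_filter.1 hz).2
  have hss : C ∪ S ⊂ s := by
    refine ssubset_of_subset_of_ne (union_subset (fun z hz => (hCR z hz).1) (filter_subset _ _))
      fun h => ?_
    rcases mem_union.1 (h ▸ ha) with h | h
    exacts [(hCR a h).2.1 rfl, G.irrefl (mem_filter.1 h).2.1]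
  obtain ⟨v, hv, hvS, hsimp⟩ := ih _ hss S hS fun h =>
    hnadj (mem_filter.1 (mem_coe.1 (h (mem_coe.2 (mem_union_left _ hbC))))).2.1
  have hvC : v ∈ C := (mem_union.1 hv).resolve_right hvS
  obtain ⟨hvs, hva, hav⟩ := hCR v hvC
  refine ⟨v, hvs, hva, hav, hsimp.subset ?_⟩
  rintro z ⟨hvz, hz⟩
  refine ⟨hvz, ?_⟩
  by_cases haz : G.Adj a z
  · exact mem_union_right _ (mem_filter.2 ⟨hz, haz, v, hvC, hvz.symm⟩)
  · refine mem_union_left _ (hCclosed v hvC z (mem_filter.2 ⟨hz, ?_, haz⟩) hvz)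
    rintro rfl
    exact hav hvz.symm

/-- Dirac's lemma, strengthened to avoid a given clique so that the induction goes through. -/
theorem IsChordalGraph.exists_isSimplicial_notMem (hG : IsChordalGraph G) (s : Finset V)
    {K : Set V} (hK : G.IsClique K) (hsK : ¬ ↑s ⊆ K) : ∃ v ∈ s, v ∉ K ∧ IsSimplicial G s v := by
  induction s using Finset.strongInduction generalizing K with
  | H s ih =>
  by_cases hs : G.IsClique (s : Set V)
  · obtain ⟨z, hz, hzK⟩ := Set.not_subset.1 hsK
    exact ⟨z, hz, hzK, hs.subset Set.inter_subset_right⟩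
  by_cases hKs : ∃ a ∈ s, a ∈ K ∧ ∃ b ∈ s, a ≠ b ∧ ¬ G.Adj a b
  · obtain ⟨a, ha, haK, b, hb, hab, hnadj⟩ := hKs
    obtain ⟨v, hv, hva, hav, hsimp⟩ := hG.exists_isSimplicial_not_adj ih ha hb hab hnadj
    exact ⟨v, hv, fun hvK => hav (hK haK hvK hva.symm), hsimp⟩
  · obtain ⟨a, ha, b, hb, hab, hnadj⟩ : ∃ a ∈ s, ∃ b ∈ s, a ≠ b ∧ ¬ G.Adj a b := by
      simpa [IsClique, Set.Pairwise] using hs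
    obtain ⟨v, hv, hva, hav, hsimp⟩ := hG.exists_isSimplicial_not_adj ih ha hb hab hnadj
    exact ⟨v, hv, fun hvK => hKs ⟨v, hv, hvK, a, ha, hva, fun h => hav h.symm⟩, hsimp⟩

theorem IsChordalGraph.exists_isSimplicial (hG : IsChordalGraph G) {s : Finset V}
    (hs : s.Nonempty) : ∃ v ∈ s, IsSimplicial G s v :=
  have ⟨v, hv, _, hsimp⟩ := hG.exists_isSimplicial_notMem s isClique_empty
    (by simpa [Set.subset_empty_iff] using hs.ne_empty)
  ⟨v, hv, hsimp⟩

end Chordal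

section DPColoring

variable {V W : Type} {G : SimpleGraph V} {H : SimpleGraph W} {L : V → Finset W}

/-- `f` picks the colour `f v ∈ L v` of each `v ∈ U`; its values off `U` do not matter. -/
def IsHColoring (H : SimpleGraph W) (L : V → Finset W) (U : Finset V) (f : V → W) : Prop :=
  (∀ v ∈ U, f v ∈ L v) ∧ ∀ u ∈ U, ∀ w ∈ U, ¬ H.Adj (f u) (f w)

theorem DPCover.exists_mem_forall_not_adj (hC : DPCover G H L) {v : V} {N : Finset V}
    (hN : ∀ u ∈ N, G.Adj u v) {f : V → W} (hf : ∀ u ∈ N, f u ∈ L u) (hcard : #N < #(L v)) :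
    ∃ c ∈ L v, ∀ u ∈ N, ¬ H.Adj (f u) c := by
  classical
  have hbad : #(N.biUnion fun u => {c ∈ L v | H.Adj (f u) c}) < #(L v) :=
    calc _ ≤ ∑ u ∈ N, #{c ∈ L v | H.Adj (f u) c} := card_biUnion_le
      _ ≤ ∑ _u ∈ N, 1 := sum_le_sum fun u hu => card_le_one.2 fun c hc c' hc' =>
          hC.matching (hN u hu) _ (hf u hu) c (mem_filter.1 hc).1 c' (mem_filter.1 hc').1
            (mem_filter.1 hc).2 (mem_filter.1 hc').2
      _ < #(L v) := by simpa using hcard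
  obtain ⟨c, hc, hcN⟩ := exists_mem_notMem_of_card_lt_card hbad
  exact ⟨c, hc, fun u hu hadj => hcN (mem_biUnion.2 ⟨u, hu, mem_filter.2 ⟨hc, hadj⟩⟩)⟩

theorem DPCover.exists_isHColoring_of_degenerate [DecidableRel G.Adj] (hC : DPCover G H L)
    (hL : ∀ v, (L v).Nonempty) (U : Finset V)
    (hU : ∀ s ⊆ U, s.Nonempty → ∃ v ∈ s, #{w ∈ s | G.Adj v w} < #(L v)) :
    ∃ f, IsHColoring H L U f := by
  classical
  induction U using Finset.strongInduction with
  | H U ih =>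
  obtain rfl | hUne := U.eq_empty_or_nonempty
  · exact ⟨fun v => (hL v).choose, by simp [IsHColoring]⟩
  obtain ⟨v, hv, hdeg⟩ := hU U Subset.rfl hUne
  obtain ⟨f, hfL, hfH⟩ := ih (U.erase v) (erase_ssubset hv) fun s hs =>
    hU s (hs.trans (erase_subset v U))
  have hfL' : ∀ u ∈ U, u ≠ v → f u ∈ L u := fun u hu huv => hfL u (mem_erase.2 ⟨huv, hu⟩)
  obtain ⟨c, hc, hcf⟩ := hC.exists_mem_forall_not_adj (N := {w ∈ U | G.Adj v w})
    (fun u hu => (mem_filter.1 hu).2.symm)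
    (fun u hu => hfL' u (mem_filter.1 hu).1 (mem_filter.1 hu).2.ne') hdeg
  have hc_free : ∀ u ∈ U, u ≠ v → ¬ H.Adj (f u) c := fun u hu huv hadj => by
    by_cases hvu : G.Adj v u
    · exact hcf u (mem_filter.2 ⟨hu, hvu⟩) hadj
    · exact hC.nonadj huv (fun h => hvu h.symm) _ (hfL' u hu huv) c hc hadj
  refine ⟨Function.update f v c, fun u hu => ?_, fun u hu w hw => ?_⟩
  · rcases eq_or_ne u v with rfl | huv
    · simpa using hc
    · simpa [huv] using hfL' u hu huv
  · rcases eq_or_ne u v with rfl | huv <;> rcases eq_or_ne w u with rfl | hwu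
    · exact H.irrefl
    · simpa [hwu] using fun h => hc_free w hw hwu h.symm
    · exact H.irrefl
    · rcases eq_or_ne w v with rfl | hwv
      · simpa [huv] using hc_free u hu huv
      · simpa [huv, hwv] using hfH u (mem_erase.2 ⟨huv, hu⟩) w (mem_erase.2 ⟨hwv, hw⟩)

theorem IsChordalGraph.exists_isHColoring (hG : IsChordalGraph G) (hC : DPCover G H L) {t : ℕ}
    (ht : 0 < t) (hL : ∀ v, t ≤ #(L v)) (U : Finset V)
    (hU : ∀ K ⊆ U, G.IsClique (K : Set V) → #K ≤ t) : ∃ f, IsHColoring H L U f := by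
  classical
  refine hC.exists_isHColoring_of_degenerate (fun v => card_pos.1 (ht.trans_le (hL v))) U
    fun s hs hne => ?_
  obtain ⟨v, hv, hsimp⟩ := hG.exists_isSimplicial hne
  refine ⟨v, hv, ?_⟩
  have hK : G.IsClique (↑(insert v {w ∈ s | G.Adj v w}) : Set V) := by
    rw [coe_insert]
    refine (hsimp.subset fun w hw => ?_).insert fun w hw _ => ?_
    · exact ⟨(mem_filter.1 hw).2, (mem_filter.1 hw).1⟩
    · exact (mem_filter.1 hw).2
  have := hU _ (insert_subset (hs hv) ((filter_subset _ _).trans hs)) hK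
  rw [card_insert_of_notMem (by simp)] at this
  exact (Nat.lt_of_succ_le this).trans_le (hL v)

theorem IsHColoring.card_le_indepNum [Fintype W] {U : Finset V} {f : V → W}
    (hC : DPCover G H L) (hf : IsHColoring H L U f) : #U ≤ _root_.indepNum H := by
  classical
  have hinj : Set.InjOn f U := fun u hu w hw h =>
    (hC.partition (f u)).unique (hf.1 u hu) (h ▸ hf.1 w hw)
  rw [← card_image_of_injOn hinj]
  refine le_csSup ⟨Fintype.card W, ?_⟩ ⟨_, ?_, rfl⟩
  · rintro _ ⟨S, -, rfl⟩
    exact card_le_univ S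
  · simp only [IsIndepFinset, mem_image]
    rintro _ ⟨u, hu, rfl⟩ _ ⟨w, hw, rfl⟩
    exact hf.2 u hu w hw

/-- The cover `G □ Kⱼ`, whose `H`-colourings are the proper `j`-colourings of `G`. -/
theorem dpCover_boxProd_top (G : SimpleGraph V) (j : ℕ) :
    DPCover G (G □ (⊤ : SimpleGraph (Fin j))) fun v => {v} ×ˢ univ where
  partition w := ⟨w.1, by simp, fun v hv => by
    obtain ⟨i, rfl⟩ : ∃ i, (v, i) = w := by simpa using hv
    rfl⟩
  cliques v a ha b hb hab := by
    simp only [mem_product, mem_singleton] at ha hb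
    exact .inr ⟨fun h => hab (Prod.ext (ha.1.trans hb.1.symm) h), ha.1.trans hb.1.symm⟩
  matching u v huv a ha b hb b' hb' hab hab' := by
    simp only [mem_product, mem_singleton] at ha hb hb'
    simp only [boxProd_adj, top_adj] at hab hab'
    have hne : a.1 ≠ b.1 := ha.1 ▸ hb.1 ▸ huv.ne
    have hne' : a.1 ≠ b'.1 := ha.1 ▸ hb'.1 ▸ huv.ne
    exact Prod.ext (hb.1.trans hb'.1.symm)
      (((hab.resolve_right fun h => hne h.2).2).symm.trans
        (hab'.resolve_right fun h => hne' h.2).2)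
  nonadj u v huv hnadj a ha b hb hab := by
    simp only [mem_product, mem_singleton] at ha hb
    rcases hab with h | h
    · exact hnadj (ha.1 ▸ hb.1 ▸ h.1)
    · exact huv (ha.1 ▸ hb.1 ▸ h.2)

theorem colorable_of_isIndepFinset_boxProd_top [Fintype V] {j : ℕ} {S : Finset (V × Fin j)}
    (hS : IsIndepFinset (G □ ⊤) S) (hcard : #S = Fintype.card V) : G.Colorable j := by
  classical
  have hinj : Set.InjOn Prod.fst (S : Set (V × Fin j)) := fun a ha b hb h => by
    by_contra hab
    exact hS a ha b hb (.inr ⟨fun h' => hab (Prod.ext h h'), h⟩)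
  have himg : S.image Prod.fst = univ :=
    eq_univ_of_card _ (by rw [card_image_of_injOn hinj, hcard])
  have hcol : ∀ v, ∃ i, (v, i) ∈ S := fun v => by
    obtain ⟨w, hw, rfl⟩ := mem_image.1 (himg ▸ mem_univ v)
    exact ⟨w.2, hw⟩
  choose col hcol using hcol
  exact ⟨Coloring.mk col fun {u v} huv heq => hS _ (hcol u) _ (hcol v) (.inl ⟨huv, heq⟩)⟩

theorem colorable_chiDP [Fintype V] (G : SimpleGraph V) (h : chiDP G ≠ 0) :
    G.Colorable (chiDP G) := by
  obtain ⟨S, hS, hcard⟩ := Nat.sInf_mem (Nat.nonempty_of_pos_sInf (Nat.pos_of_ne_zero h))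
    (V × Fin (chiDP G)) inferInstance _ _ (dpCover_boxProd_top G _) fun v => by
      simp only [card_product, card_singleton, card_univ, Fintype.card_fin, one_mul]; rfl
  exact colorable_of_isIndepFinset_boxProd_top hS hcard

theorem le_alphaDP [Fintype V] {t n : ℕ}
    (h : ∀ (W : Type) [Fintype W] (H : SimpleGraph W) (L : V → Finset W),
      DPCover G H L → (∀ v, #(L v) = t) → n ≤ _root_.indepNum H) : n ≤ alphaDP G t :=
  le_csInf ⟨_, V × Fin t, inferInstance, _, _, dpCover_boxProd_top G t, fun v => by simp, rfl⟩
    fun _ ⟨W, _, H, L, hC, hL, hn⟩ => hn ▸ h W H L hC hL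

end DPColoring

/-- Every chordal graph is partially DP-nice. -/
theorem partiallyDPNice_of_chordal {V : Type} [Fintype V] (G : SimpleGraph V)
    (h : IsChordalGraph G) : PartiallyDPNice G := by
  classical
  intro t ht htχ
  obtain ⟨c⟩ := colorable_chiDP G (by omega)
  obtain ⟨T, hT, hTU⟩ := exists_card_eq_mul_card_le_mul_card_filter c (t := t) (by simpa using htχ)
  rw [Fintype.card_fin] at hTU
  set U : Finset V := {v | c v ∈ T}
  have hω : ∀ K ⊆ U, G.IsClique (K : Set V) → #K ≤ t := fun K hKU hK =>
    hT ▸ card_le_card_of_injOn c (fun v hv => (mem_filter.1 (hKU hv)).2)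
      fun u hu w hw huw => by_contra fun hne => c.valid (hK hu hw hne) huw
  have hα : #U ≤ alphaDP G t := le_alphaDP fun W _ H L hC hL =>
    have ⟨_, hf⟩ := h.exists_isHColoring hC ht (fun v => (hL v).ge) _ hω
    hf.card_le_indepNum hC
  have hχ : (0 : ℚ) < chiDP G := by exact_mod_cast (by omega : 0 < chiDP G)
  rw [div_le_iff₀ hχ, mul_comm (alphaDP G t : ℚ)]
  exact_mod_cast hTU.trans (Nat.mul_le_mul_left _ hα)
end
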